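/- Let d ≥ 1, k ≥ 0 and K = 2^{dk}. Let A_k be a well-folded k-curve with vertices v_1,…,v_K and edge directions e_1,…,e_{K−1}, and let σ_1,…,σ_K be signed permutations. Form A_{k+1} by replacing each vertex v_i by the 1-curve σ_i(G(d)) translated into the cube 2·v_i + {0,1}^d and each edge of direction e_i by an edge of direction e_i from the last vertex of the i-th 1-curve to the first vertex of the (i+1)-st. Then A_{k+1} is a valid well-folded (k+1)-curve if and only if for each 1 ≤ i < K: (i) for every j ∈ {1,…,d}, sgn(σ_{i+1}^{−1}(j)) = sgn(σ_i^{−1}(j)) if and only if j equals neither or both of |σ_i(d)| and |e_i|, and otherwise sgn(σ_{i+1}^{−1}(j)) = −sgn(σ_i^{−1}(j)); and (ii) sgn(σ_{i+1}^{−1}(e_i)) = 1. -/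

import Mathlib

open MeasureTheory

/-! ## Basic objects: points of `ℤ^d` (indexed by coordinates `1,…,d`), directions,
Gray codes, curves on the grid, inflation, well-foldedness, hyperorthogonality. -/

/-- A point of the grid `ℤ^d`; only coordinates `1,…,d` are meaningful
(coordinate `0` and coordinates `> d` are kept equal to `0`). -/
abbrev Pt : Type := ℕ → ℤ

def ptZero : Pt := fun _ => 0

/-- `flipped i = 1` if `i < 0`, and `0` otherwise. -/
def flipped (i : ℤ) : ℤ := if i < 0 then 1 else 0

/-- Reversal of a free curve (sequence of directions): reverse the order and
negate every direction. -/
def grayRev (l : List ℤ) : List ℤ := (l.map (fun x => -x)).reverse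

/-- The Gray-code free curve `G(d)`: `G(0)` is empty and `G(d)` is the
concatenation of `G(d-1)`, the single direction `d`, and the reverse of `G(d-1)`. -/
def G : ℕ → List ℤ
  | 0 => []
  | d + 1 => G d ++ [((d : ℤ) + 1)] ++ grayRev (G d)

/-- Moving a point one step in direction `e`: coordinate `|e|` changes by `sgn e`. -/
def move (v : Pt) (e : ℤ) : Pt := fun j => if j = e.natAbs then v j + e.sign else v j

/-- The vertices of the path starting at `start` whose successive edge
directions are given by `dirs`. -/
def pathVertices (start : Pt) (dirs : List ℤ) : List Pt := dirs.scanl move start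

/-- `e` is a valid direction in `d` dimensions: `e ∈ {−d,…,−1,1,…,d}`. -/
def IsDir (d : ℕ) (e : ℤ) : Prop := e ≠ 0 ∧ e.natAbs ≤ d

/-- The (ordered) pair `(v,w)` is an edge with direction `e`. -/
def HasDir (d : ℕ) (v w : Pt) (e : ℤ) : Prop := IsDir d e ∧ w = move v e

/-- `(v,w)` is an edge of the grid. -/
def IsEdge (d : ℕ) (v w : Pt) : Prop := ∃ e, HasDir d v w e

/-- A curve on the grid: a finite sequence of distinct points in which each pair of
consecutive points differs by `±1` in exactly one coordinate. -/
def IsGridCurve (d : ℕ) (c : List Pt) : Prop := c.Nodup ∧ c.Chain' (IsEdge d)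

/-- Membership in the cube `{0,…,2^k−1}^d` (unused coordinates are `0`). -/
def InCube (d k : ℕ) (v : Pt) : Prop :=
  (∀ j, 1 ≤ j → j ≤ d → 0 ≤ v j ∧ v j < 2 ^ k) ∧ (∀ j, j = 0 ∨ d < j → v j = 0)

/-- A `k`-curve: a Hamiltonian path on the grid `{0,…,2^k−1}^d`. -/
def IsKCurve (d k : ℕ) (c : List Pt) : Prop :=
  IsGridCurve d c ∧ ∀ v : Pt, v ∈ c ↔ InCube d k v

/-- A signed permutation of `{−d,…,−1,1,…,d}`: a bijection `σ` of this set
with `σ(−k) = −σ(k)` (bundled with its inverse). -/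
structure SignedPerm (d : ℕ) where
  f : ℤ → ℤ
  inv : ℤ → ℤ
  maps : ∀ i : ℤ, IsDir d i → IsDir d (f i)
  maps_inv : ∀ i : ℤ, IsDir d i → IsDir d (inv i)
  neg : ∀ i : ℤ, f (-i) = -f i
  neg_inv : ∀ i : ℤ, inv (-i) = -inv i
  left_inv : ∀ i : ℤ, IsDir d i → inv (f i) = i
  right_inv : ∀ i : ℤ, IsDir d i → f (inv i) = i

/-- The 1-curve `σ(G(d))` (an isometric image of the Gray-code curve) placed in the
cube `2·v + {0,1}^d`; its entry corner is forced to be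
`2·v + (flipped(σ⁻¹(1)),…,flipped(σ⁻¹(d)))`. -/
def grayPiece (d : ℕ) (σ : SignedPerm d) (v : Pt) : List Pt :=
  pathVertices (fun j => 2 * v j + if 1 ≤ j ∧ j ≤ d then flipped (σ.inv (j : ℤ)) else 0)
    ((G d).map σ.f)

/-- `B` is obtained from `A` by (well-folded) inflation: each vertex of `A` is
replaced by an isometric image of `G(d)` in the corresponding subcube, and the
result is a valid curve on the grid. (Reversed images of `G(d)` are themselves
images of `G(d)` under another signed permutation, so no generality is lost.) -/
def IsInflationWF (d : ℕ) (A B : List Pt) : Prop :=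
  ∃ σ : ℕ → SignedPerm d,
    B = ((List.range A.length).map (fun i => grayPiece d (σ i) (A.getD i ptZero))).flatten ∧
    IsGridCurve d B

/-- A curve is well-folded if it is a single vertex or is obtained by inflation from a
well-folded curve, every inserted 1-curve being an isometric image of `G(d)`. -/
inductive WellFolded (d : ℕ) : List Pt → Prop
  | single (v : Pt) : WellFolded d [v]
  | inflate {A B : List Pt} : WellFolded d A → IsInflationWF d A B → WellFolded d B

/-- The set of axes in which `v` and `w` differ (for a grid edge this is the
singleton of its axis). -/
def axesOfEdge (d : ℕ) (v w : Pt) : Finset ℕ :=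
  (Finset.range (d + 1)).filter (fun j => v j ≠ w j)

/-- Hyperorthogonality: for every `n ∈ {0,…,d−2}`, every `2^n` consecutive
edges of the curve have exactly `n+1` distinct axes. -/
def Hyperorthogonal (d : ℕ) (c : List Pt) : Prop :=
  ∀ n, n ≤ d - 2 → ∀ s, s + 2 ^ n + 1 ≤ c.length →
    ((Finset.range (2 ^ n)).biUnion
      (fun t => axesOfEdge d (c.getD (s + t) ptZero) (c.getD (s + t + 1) ptZero))).card = n + 1

/-- The depth of a direction `a` in a signed permutation `σ`:
`0` if `|a| ∈ {|σ(d)|,|σ(d−1)|}`, and otherwise the number `j` with `|σ(d−1−j)| = |a|`. -/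
def depth (d : ℕ) (σ : SignedPerm d) (a : ℤ) : ℕ :=
  if (σ.inv a).natAbs = d ∨ (σ.inv a).natAbs = d - 1 then 0 else d - 1 - (σ.inv a).natAbs

/-- The (signed) direction of the edge from `v` to `w`
(for a grid edge with axis `j` this is `±j`). -/
def dirOf (d : ℕ) (v w : Pt) : ℤ :=
  ∑ j ∈ (Finset.range (d + 1)).filter (fun j => v j ≠ w j), (j : ℤ) * (w j - v j)

/-- The axis of the edge from `v` to `w`. -/
def axisOf (d : ℕ) (v w : Pt) : ℕ := (dirOf d v w).natAbs

/-! ## Extended curves -/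

/-- For the extended curve with entry-edge direction `en`, vertex list `c` and
exit-edge direction `ex`, the axis of its `t`-th edge, where the entry edge has
index `0`, the internal edges have indices `1,…,c.length − 1` (edge `t` joins
`c[t−1]` and `c[t]`) and the exit edge has index `c.length`. -/
def axE (d : ℕ) (en : ℤ) (c : List Pt) (ex : ℤ) (t : ℕ) : ℕ :=
  if t = 0 then en.natAbs
  else if t = c.length then ex.natAbs
  else axisOf d (c.getD (t - 1) ptZero) (c.getD t ptZero)

/-- The edge distance of the axis `a` to the vertex with index `p` within the
extended curve `(en, c, ex)`: one less than the number of edges of the smallest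
contiguous subcurve containing this vertex and an edge with axis `a`. -/
noncomputable def edgedistE (d : ℕ) (en : ℤ) (c : List Pt) (ex : ℤ) (p a : ℕ) : ℕ :=
  sInf {m | ∃ t, t ≤ c.length ∧ axE d en c ex t = a ∧
    m = if t ≤ p then p - t else t - p - 1}

/-- Hyperorthogonality of an extended curve: every `2^n` consecutive edges
(including the entry and exit edges) have exactly `n+1` distinct axes, for all
`n ∈ {0,…,d−2}`. -/
def HyperorthogonalE (d : ℕ) (en : ℤ) (c : List Pt) (ex : ℤ) : Prop :=
  ∀ n, n ≤ d - 2 → ∀ s, s + 2 ^ n ≤ c.length + 1 →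
    ((Finset.range (2 ^ n)).image (fun t => axE d en c ex (s + t))).card = n + 1

/-- The sequence of approximating curves determined by a system of signed
permutations `σ k i` (one for each vertex `i` of the `k`-th curve):
`A_0` is the single vertex at the origin and `A_{k+1}` is obtained from `A_k` by
inflation, vertex `i` being replaced by the 1-curve `σ_{k,i}(G(d))`. -/
def buildCurve (d : ℕ) (σ : ℕ → ℕ → SignedPerm d) : ℕ → List Pt
  | 0 => [ptZero]
  | k + 1 =>
    ((List.range (buildCurve d σ k).length).map
      (fun i => grayPiece d (σ k i) ((buildCurve d σ k).getD i ptZero))).flatten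

/-- `f : [0,1] → [0,1]^d` is the space-filling curve approximated by the curves
`A k`: the `i`-th vertex of `A k` corresponds to the cube `2^{−k}(v_{k,i} + [0,1]^d)`,
and `f` maps `[i/2^{dk},(i+1)/2^{dk}]` into that cube. -/
def Approximates (d : ℕ) (A : ℕ → List Pt) (f : ℝ → Fin d → ℝ) : Prop :=
  ∀ k i, i < (A k).length → ∀ t : ℝ,
    (i : ℝ) / 2 ^ (d * k) ≤ t → t ≤ ((i : ℝ) + 1) / 2 ^ (d * k) →
    ∀ j : Fin d,
      ((((A k).getD i ptZero) ((j : ℕ) + 1) : ℝ) / 2 ^ k ≤ f t j ∧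
        f t j ≤ ((((A k).getD i ptZero) ((j : ℕ) + 1) : ℝ) + 1) / 2 ^ k)

/-- The smallest axis-aligned box containing a (nonempty, bounded) set `S ⊆ ℝ^d`. -/
noncomputable def bbox (d : ℕ) (S : Set (Fin d → ℝ)) : Set (Fin d → ℝ) :=
  Set.univ.pi fun j => Set.Icc (sInf ((fun p => p j) '' S)) (sSup ((fun p => p j) '' S))

/-! ## General inflation (arbitrary 1-curves), isometric copies, self-similarity -/

/-- `c` is a 1-curve on the translated unit cube `2·base + {0,1}^d`. -/
def IsUnitCurveAt (d : ℕ) (base : Pt) (c : List Pt) : Prop :=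
  IsGridCurve d c ∧
    ∀ v : Pt, v ∈ c ↔
      ((∀ j, 1 ≤ j → j ≤ d → v j = 2 * base j ∨ v j = 2 * base j + 1) ∧
        ∀ j, j = 0 ∨ d < j → v j = 2 * base j)

/-- `B` is obtained from `A` by (general) inflation: each vertex `v_i` of `A` is
replaced by a 1-curve on `2·v_i + {0,1}^d`, and each edge of `A` with direction `e_i`
is replaced by an edge of the same direction connecting consecutive 1-curves. -/
def IsInflation (d : ℕ) (A B : List Pt) : Prop :=
  ∃ C : ℕ → List Pt,
    B = ((List.range A.length).map C).flatten ∧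
    IsGridCurve d B ∧
    (∀ i, i < A.length → IsUnitCurveAt d (A.getD i ptZero) (C i)) ∧
    (∀ i, i + 1 < A.length → ∀ e : ℤ,
      HasDir d (A.getD i ptZero) (A.getD (i + 1) ptZero) e →
      HasDir d ((C i).getLastD ptZero) ((C (i + 1)).headD ptZero) e)

/-- `InflationChain d k X`: `X` is constructed from a single vertex by `k` steps
of inflation. -/
inductive InflationChain (d : ℕ) : ℕ → List Pt → Prop
  | base (v : Pt) : InflationChain d 0 [v]
  | step {k : ℕ} {A B : List Pt} :
      InflationChain d k A → IsInflation d A B → InflationChain d (k + 1) B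

/-- The hyperoctahedral symmetry of the cube `{0,…,M}^d` given by the signed
permutation `σ`: the coordinate `|σ⁻¹(j)|` of the argument is sent to coordinate `j`,
reflected (`x ↦ M − x`) whenever `σ⁻¹(j) < 0`. -/
def applySP (d : ℕ) (M : ℤ) (σ : SignedPerm d) (x : Pt) : Pt :=
  fun j =>
    if 1 ≤ j ∧ j ≤ d then
      if 0 ≤ σ.inv (j : ℤ) then x (σ.inv (j : ℤ)).natAbs
      else M - x (σ.inv (j : ℤ)).natAbs
    else x j

/-- `B` is an isometric copy of the curve `A` (living in a cube `{0,…,M}^d`):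
a hyperoctahedral symmetry, possibly composed with reversal, followed by a translation. -/
def IsometricCopy (d : ℕ) (M : ℤ) (A B : List Pt) : Prop :=
  ∃ σ : SignedPerm d, ∃ rev : Bool, ∃ tr : Pt,
    B = (if rev then A.reverse else A).map (fun v => fun j => applySP d M σ v j + tr j)

/-- Self-similarity of one approximation step: `B` is the concatenation of `2^d`
isometric copies of the `k`-curve `A`, connected by single edges. -/
def SelfSimilarStep (d k : ℕ) (A B : List Pt) : Prop :=
  ∃ parts : ℕ → List Pt,
    B = ((List.range (2 ^ d)).map parts).flatten ∧
    IsGridCurve d B ∧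
    ∀ m, m < 2 ^ d → IsometricCopy d ((2 : ℤ) ^ k - 1) A (parts m)

/-- Coordinate `a ∈ {1,…,d}` of a point of `ℝ^d`. -/
noncomputable def coordR (d : ℕ) (x : Fin d → ℝ) (a : ℕ) : ℝ :=
  if h : a - 1 < d then x ⟨a - 1, h⟩ else 0

/-- The hyperoctahedral symmetry of the unit cube `[0,1]^d` given by the signed
permutation `σ`. -/
noncomputable def applySPR (d : ℕ) (σ : SignedPerm d) (x : Fin d → ℝ) : Fin d → ℝ :=
  fun j =>
    if 0 ≤ σ.inv ((j : ℕ) + 1 : ℤ) then coordR d x (σ.inv ((j : ℕ) + 1 : ℤ)).natAbs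
    else 1 - coordR d x (σ.inv ((j : ℕ) + 1 : ℤ)).natAbs

/-- `f` is a self-similar hyperorthogonal well-folded space-filling curve:
it is approximated by a sequence of `k`-curves, starting from a single vertex,
in which each curve is obtained from the previous one by well-folded inflation,
all approximating curves are hyperorthogonal, and each approximating curve is the
concatenation of `2^d` isometric copies of the previous one. -/
def SSHOWFcurve (d : ℕ) (f : ℝ → Fin d → ℝ) : Prop :=
  ∃ A : ℕ → List Pt,
    A 0 = [ptZero] ∧
    (∀ k, IsInflationWF d (A k) (A (k + 1))) ∧
    (∀ k, IsKCurve d k (A k)) ∧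
    (∀ k, Hyperorthogonal d (A k)) ∧
    (∀ k, SelfSimilarStep d k (A k) (A (k + 1))) ∧
    Approximates d A f

/-- Two space-filling curves are the same up to hyperoctahedral symmetry and
reversal. -/
def curveEquiv (d : ℕ) (f g : ℝ → Fin d → ℝ) : Prop :=
  ∃ τ : SignedPerm d,
    (∀ t ∈ Set.Icc (0 : ℝ) 1, g t = applySPR d τ (f t)) ∨
    (∀ t ∈ Set.Icc (0 : ℝ) 1, g t = applySPR d τ (f (1 - t)))

/-- The direction of the entry edge of the extended child curve `C'_m` within the
inflation of the extended curve `(e0, A, e1)`. -/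
def childEntryDir (d : ℕ) (A : List Pt) (e0 : ℤ) (m : ℕ) : ℤ :=
  if m = 0 then e0 else dirOf d (A.getD (m - 1) ptZero) (A.getD m ptZero)

/-- The direction of the exit edge of the extended child curve `C'_m` within the
inflation of the extended curve `(e0, A, e1)`. -/
def childExitDir (d : ℕ) (A : List Pt) (e1 : ℤ) (m : ℕ) : ℤ :=
  if m + 1 = A.length then e1 else dirOf d (A.getD m ptZero) (A.getD (m + 1) ptZero)

/-- The local edge distance of the axis `a` to the vertex with index `i` within the
extended approximating curve `A'_k` (entry direction `e0`, exit direction `e1`)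
of the system `σ`: the edge distance within the extended child curve of `A'_{k-1}`
containing this vertex. -/
noncomputable def led (d : ℕ) (σ : ℕ → ℕ → SignedPerm d) (e0 e1 : ℤ) :
    ℕ → ℕ → ℕ → ℕ
  | 0, _, a => edgedistE d e0 (buildCurve d σ 0) e1 0 a
  | k + 1, i, a =>
    edgedistE d (childEntryDir d (buildCurve d σ k) e0 (i / 2 ^ d))
      (grayPiece d (σ k (i / 2 ^ d)) ((buildCurve d σ k).getD (i / 2 ^ d) ptZero))
      (childExitDir d (buildCurve d σ k) e1 (i / 2 ^ d))
      (i % 2 ^ d) a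

/-- The system of permutations `σ` describes a sequence of extended hyperorthogonal
well-folded approximating curves with entry direction `e0` and exit direction `e1`,
in which the signs of `σ_{k,1}⁻¹` are prescribed by `s`, and the elements of every
unsigned permutation `|σ_{k,i}|` are sorted by decreasing local edge distance. -/
def GoodSystem (d : ℕ) (e0 e1 : ℤ) (s : ℕ → ℕ → ℤ) (σ : ℕ → ℕ → SignedPerm d) : Prop :=
  (∀ k, IsKCurve d k (buildCurve d σ k)) ∧
  (∀ k, HyperorthogonalE d e0 (buildCurve d σ k) e1) ∧
  (∀ k, ¬ InCube d k (move ((buildCurve d σ k).headD ptZero) (-e0))) ∧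
  (∀ k, ¬ InCube d k (move ((buildCurve d σ k).getLastD ptZero) e1)) ∧
  (∀ k j, 1 ≤ j → j ≤ d → Int.sign ((σ k 0).inv (j : ℤ)) = s k j) ∧
  (∀ k i, i < (buildCurve d σ k).length →
    ∀ p q : ℕ, 1 ≤ p → p ≤ q → q ≤ d →
      led d σ e0 e1 k i (((σ k i).f (q : ℤ)).natAbs) ≤
        led d σ e0 e1 k i (((σ k i).f (p : ℤ)).natAbs))

/-- The Butz-Moore generalization of the Hilbert curve, described by the conditions
on its system of signed permutations: `|σ_{k,i}(d)| = 1` for the first and last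
subcube, `|σ_{k,i}(d)| = max(|e_{k,i−1}|,|e_{k,i}|)` in between, all unsigned
permutations are cyclic rotations, and the entry is at the origin. -/
def ButzMoore (d : ℕ) (σ : ℕ → ℕ → SignedPerm d) : Prop :=
  (∀ k, IsKCurve d k (buildCurve d σ k)) ∧
  (∀ k i, i < 2 ^ (d * k) → (i = 0 ∨ i = 2 ^ (d * k) - 1) →
    ((σ k i).f (d : ℤ)).natAbs = 1) ∧
  (∀ k i, 0 < i → i + 1 < 2 ^ (d * k) →
    ((σ k i).f (d : ℤ)).natAbs =
      max (dirOf d ((buildCurve d σ k).getD (i - 1) ptZero)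
            ((buildCurve d σ k).getD i ptZero)).natAbs
          (dirOf d ((buildCurve d σ k).getD i ptZero)
            ((buildCurve d σ k).getD (i + 1) ptZero)).natAbs) ∧
  (∀ k i j, 1 ≤ j → j ≤ d →
    ((σ k i).f (j : ℤ)).natAbs = ((((σ k i).f (d : ℤ)).natAbs + j - 1) % d) + 1) ∧
  (∀ k j, 1 ≤ j → j ≤ d → 0 ≤ (σ k 0).inv (j : ℤ))

/-! ## Generalized curves (diagonal edges allowed) -/

/-- A generalized edge: `w ≠ v` and every coordinate changes by at most 1. -/
def IsGenEdge (d : ℕ) (v w : Pt) : Prop :=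
  v ≠ w ∧ (∀ j, 1 ≤ j → j ≤ d → |w j - v j| ≤ 1) ∧ ∀ j, j = 0 ∨ d < j → w j = v j

/-- A generalized curve on the grid (diagonal edges allowed). -/
def IsGenCurve (d : ℕ) (c : List Pt) : Prop := c.Nodup ∧ c.Chain' (IsGenEdge d)

/-- Generalized inflation: vertices are replaced by 1-curves on the corresponding
subcubes, consecutive 1-curves being joined by a single (possibly diagonal) edge. -/
def IsGenInflation (d : ℕ) (A B : List Pt) : Prop :=
  ∃ C : ℕ → List Pt,
    B = ((List.range A.length).map C).flatten ∧
    IsGenCurve d B ∧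
    (∀ i, i < A.length → IsUnitCurveAt d (A.getD i ptZero) (C i))

/-!
The 1-curve `σ(G(d))` in the cube `2v + {0,1}^d` enters at the corner whose `j`-th bit is
`flipped (σ⁻¹ j)` and, since `G(d)` runs from `0` to the unit vector `e_d`, leaves at that
corner moved in direction `σ(d)`. The two 1-curves attached to consecutive vertices `v` and
`v + e` lie in adjacent subcubes, and a grid edge can join a corner of the first to a corner of
the second only if it crosses their common face: the two corners agree in every bit except the
one of axis `|e|`, and the entry corner lies on the face. Written out for the entry and exit
corners above, this is exactly the pair of sign conditions. The remaining requirements of a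
`(k+1)`-curve (distinct vertices, covering the cube) hold for any choice of 1-curves in the
subcubes of a `k`-curve, and well-foldedness of the result is then immediate.
-/

lemma isDir_natCast {d j : ℕ} (h1 : 1 ≤ j) (h2 : j ≤ d) : IsDir d j :=
  ⟨by omega, by omega⟩

lemma IsDir.neg {d : ℕ} {g : ℤ} (h : IsDir d g) : IsDir d (-g) :=
  ⟨neg_ne_zero.mpr h.1, by rw [Int.natAbs_neg]; exact h.2⟩

lemma Int.sign_cases_of_ne_zero {t : ℤ} (h : t ≠ 0) :
    t.sign = 1 ∧ 0 < t ∨ t.sign = -1 ∧ t < 0 := by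
  rcases h.lt_or_gt with h | h
  · exact Or.inr ⟨Int.sign_eq_neg_one_of_neg h, h⟩
  · exact Or.inl ⟨Int.sign_eq_one_of_pos h, h⟩

lemma Int.sign_eq_neg_sign_of_sign_ne {s t : ℤ} (hs : s ≠ 0) (ht : t ≠ 0)
    (h : s.sign ≠ t.sign) : s.sign = -t.sign := by
  have := Int.sign_cases_of_ne_zero hs
  have := Int.sign_cases_of_ne_zero ht
  omega

lemma sign_eq_sign_iff_flipped_eq {s t : ℤ} (hs : s ≠ 0) (ht : t ≠ 0) :
    s.sign = t.sign ↔ flipped s = flipped t := by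
  have := Int.sign_cases_of_ne_zero hs
  have := Int.sign_cases_of_ne_zero ht
  simp only [flipped]
  split_ifs <;> omega

namespace SignedPerm

variable {d : ℕ} (σ : SignedPerm d)

def symm : SignedPerm d :=
  ⟨σ.inv, σ.f, σ.maps_inv, σ.maps, σ.neg_inv, σ.neg, σ.right_inv, σ.left_inv⟩

@[simp]
lemma symm_symm : σ.symm.symm = σ := rfl

lemma inv_eq_iff {i j : ℤ} (hi : IsDir d i) (hj : IsDir d j) : σ.inv j = i ↔ σ.f i = j :=
  ⟨fun h => h ▸ σ.right_inv j hj, fun h => h ▸ σ.left_inv i hi⟩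

end SignedPerm

lemma move_comm (x : Pt) (a b : ℤ) : move (move x a) b = move (move x b) a := by
  funext j
  simp only [move]
  split_ifs <;> ring

lemma move_move_neg (x : Pt) (g : ℤ) : move (move x g) (-g) = x := by
  funext j
  simp only [move, Int.natAbs_neg, Int.sign_neg]
  split_ifs <;> ring

lemma move_neg_move (x : Pt) (g : ℤ) : move (move x (-g)) g = x := by
  simpa using move_move_neg x (-g)

lemma move_left_injective (g : ℤ) : Function.Injective (move · g) := fun x y h => by
  simpa only [move_move_neg] using congrArg (move · (-g)) h

lemma pathVertices_cons (s : Pt) (g : ℤ) (l : List ℤ) :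
    pathVertices s (g :: l) = s :: pathVertices (move s g) l :=
  List.scanl_cons

lemma pathVertices_append (s : Pt) (l₁ l₂ : List ℤ) :
    pathVertices s (l₁ ++ l₂) =
      pathVertices s l₁ ++ (pathVertices (l₁.foldl move s) l₂).tail :=
  List.scanl_append

lemma foldl_move_move (s : Pt) (g : ℤ) (l : List ℤ) :
    l.foldl move (move s g) = move (l.foldl move s) g := by
  induction l generalizing s with
  | nil => rfl
  | cons a l ih => rw [List.foldl_cons, List.foldl_cons, move_comm, ih]

lemma grayRev_cons (g : ℤ) (l : List ℤ) : grayRev (g :: l) = grayRev l ++ [-g] := by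
  simp [grayRev]

lemma foldl_move_grayRev (s : Pt) (l : List ℤ) : (grayRev l).foldl move (l.foldl move s) = s := by
  induction l generalizing s with
  | nil => rfl
  | cons g l ih =>
    simp only [grayRev_cons, List.foldl_append, List.foldl_cons, List.foldl_nil, ih, move_move_neg]

lemma pathVertices_grayRev (s : Pt) (l : List ℤ) :
    pathVertices (l.foldl move s) (grayRev l) = (pathVertices s l).reverse := by
  induction l generalizing s with
  | nil => rfl
  | cons g l ih =>
    rw [grayRev_cons, List.foldl_cons, pathVertices_append, ih, foldl_move_grayRev,
      pathVertices_cons, pathVertices_cons, move_move_neg, List.reverse_cons]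
    rfl

lemma pathVertices_map_of_comm {F : Pt → Pt} {φ : ℤ → ℤ} {l : List ℤ}
    (h : ∀ g ∈ l, ∀ x, F (move x g) = move (F x) (φ g)) (s : Pt) :
    pathVertices (F s) (l.map φ) = (pathVertices s l).map F := by
  induction l generalizing s with
  | nil => rfl
  | cons g l ih =>
    rw [List.map_cons, pathVertices_cons, pathVertices_cons, List.map_cons,
      ← h g List.mem_cons_self, ih (fun g' hg' => h g' (List.mem_cons_of_mem _ hg'))]

lemma pathVertices_move (s : Pt) (a : ℤ) (l : List ℤ) :
    pathVertices (move s a) l = (pathVertices s l).map (move · a) := by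
  simpa using
    pathVertices_map_of_comm (F := (move · a)) (φ := id) (fun g _ x => move_comm x g a) s

lemma isChain_pathVertices {d : ℕ} {l : List ℤ} (h : ∀ g ∈ l, IsDir d g) (s : Pt) :
    (pathVertices s l).IsChain (IsEdge d) := by
  induction l generalizing s with
  | nil => exact List.IsChain.singleton s
  | cons g l ih =>
    rw [pathVertices_cons, List.isChain_cons]
    refine ⟨fun y hy => ?_, ih (fun g' hg' => h g' (List.mem_cons_of_mem _ hg')) _⟩
    rw [pathVertices, List.head?_scanl, Option.mem_some_iff] at hy
    exact ⟨g, h g List.mem_cons_self, hy.symm⟩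

lemma G_isDir (d : ℕ) : ∀ g ∈ G d, IsDir d g := by
  induction d with
  | zero => simp [G]
  | succ d ih =>
    intro g hg
    simp only [G, List.append_assoc, List.mem_append, List.mem_singleton, grayRev,
      List.mem_reverse, List.mem_map] at hg
    rcases hg with hg | rfl | ⟨g, hg, rfl⟩
    · exact ⟨(ih g hg).1, (ih g hg).2.trans d.le_succ⟩
    · exact ⟨by omega, by omega⟩
    · exact ⟨(ih g hg).neg.1, (ih g hg).neg.2.trans d.le_succ⟩

def grayPath (d : ℕ) : List Pt := pathVertices ptZero (G d)

lemma grayPath_succ (d : ℕ) :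
    grayPath (d + 1) = grayPath d ++ ((grayPath d).map (move · ((d : ℤ) + 1))).reverse := by
  rw [grayPath, G, List.append_assoc, pathVertices_append, List.singleton_append,
    pathVertices_cons, List.tail_cons, ← foldl_move_move, pathVertices_grayRev,
    pathVertices_move]
  rfl

lemma foldl_move_G {d : ℕ} (hd : 1 ≤ d) : (G d).foldl move ptZero = move ptZero d := by
  obtain ⟨d, rfl⟩ : ∃ d', d = d' + 1 := ⟨d - 1, by omega⟩
  rw [G, List.foldl_append, List.foldl_append, List.foldl_cons, List.foldl_nil,
    ← foldl_move_move, foldl_move_grayRev]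
  push_cast
  rfl

lemma move_natCast_add_one (x : Pt) (d : ℕ) :
    move x ((d : ℤ) + 1) = fun j => if j = d + 1 then x j + 1 else x j := by
  have hax : ((d : ℤ) + 1).natAbs = d + 1 := by omega
  funext j
  simp only [move, hax, Int.sign_eq_one_of_pos (by omega : (0 : ℤ) < d + 1)]

lemma inCube_one_succ_iff (d : ℕ) (x : Pt) :
    InCube (d + 1) 1 x ↔ InCube d 1 x ∨ ∃ y, InCube d 1 y ∧ move y ((d : ℤ) + 1) = x := by
  simp only [InCube, pow_one, move_natCast_add_one]
  constructor
  · rintro ⟨h1, h2⟩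
    have hlast := h1 (d + 1) (by omega) le_rfl
    by_cases hx : x (d + 1) = 0
    · refine Or.inl ⟨fun j hj1 hj2 => h1 j hj1 (by omega), fun j hj => ?_⟩
      rcases eq_or_ne j (d + 1) with rfl | hj'
      · exact hx
      · exact h2 j (by omega)
    · refine Or.inr ⟨fun j => if j = d + 1 then x j - 1 else x j,
        ⟨fun j hj1 hj2 => ?_, fun j hj => ?_⟩, funext fun j => ?_⟩ <;> dsimp only
      · rw [if_neg (by omega)]
        exact h1 j hj1 (by omega)
      · split_ifs with h
        · subst h
          omega
        · exact h2 j (by omega)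
      · split_ifs <;> ring
  · rintro (⟨h1, h2⟩ | ⟨y, ⟨h1, h2⟩, rfl⟩)
    · refine ⟨fun j hj1 hj2 => ?_, fun j hj => h2 j (by omega)⟩
      rcases eq_or_ne j (d + 1) with rfl | hj'
      · have := h2 (d + 1) (by omega)
        omega
      · exact h1 j hj1 (by omega)
    · refine ⟨fun j hj1 hj2 => ?_, fun j hj => ?_⟩ <;> dsimp only
      · split_ifs with h
        · have := h2 j (by omega)
          omega
        · exact h1 j hj1 (by omega)
      · rw [if_neg (by omega)]
        exact h2 j (by omega)

lemma mem_grayPath_iff (d : ℕ) (x : Pt) : x ∈ grayPath d ↔ InCube d 1 x := by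
  induction d generalizing x with
  | zero =>
    simp only [grayPath, G, pathVertices, List.scanl_nil, List.mem_singleton, InCube]
    constructor
    · rintro rfl
      exact ⟨fun j _ _ => by omega, fun _ _ => rfl⟩
    · exact fun h => funext fun j => h.2 j (by omega)
  | succ d ih =>
    simp only [grayPath_succ, List.mem_append, List.mem_reverse, List.mem_map, ih,
      inCube_one_succ_iff]

lemma grayPath_nodup (d : ℕ) : (grayPath d).Nodup := by
  induction d with
  | zero => exact List.nodup_singleton _
  | succ d ih =>
    rw [grayPath_succ, List.nodup_append, List.nodup_reverse]
    refine ⟨ih, ih.map (move_left_injective _), fun x hx y hy hxy => ?_⟩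
    obtain ⟨z, hz, rfl⟩ := List.mem_map.mp (List.mem_reverse.mp hy)
    have hx0 := ((mem_grayPath_iff d x).mp hx).2 (d + 1) (by omega)
    have hz0 := ((mem_grayPath_iff d z).mp hz).2 (d + 1) (by omega)
    have := congrFun hxy (d + 1)
    simp only [move_natCast_add_one, ↓reduceIte] at this
    omega

section CubeSymmetry

variable {d : ℕ} (σ : SignedPerm d)

lemma applySP_move (M : ℤ) {g : ℤ} (hg : IsDir d g) (x : Pt) :
    applySP d M σ (move x g) = move (applySP d M σ x) (σ.f g) := by
  have hfg := σ.maps g hg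
  have := Int.sign_cases_of_ne_zero hg.1
  have := Int.sign_cases_of_ne_zero hfg.1
  have := hg.2
  have := hfg.2
  funext j
  by_cases hj : 1 ≤ j ∧ j ≤ d
  · have hjd := isDir_natCast hj.1 hj.2
    have hpos : σ.inv j = g ↔ σ.f g = j := σ.inv_eq_iff hg hjd
    have hneg : σ.inv j = -g ↔ σ.f g = -j := by
      rw [σ.inv_eq_iff hg.neg hjd, σ.neg, neg_eq_iff_eq_neg]
    simp only [applySP, move, if_pos hj]
    split_ifs <;> omega
  · simp only [applySP, move, if_neg hj]
    split_ifs <;> omega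

lemma applySP_symm_applySP (M : ℤ) (x : Pt) : applySP d M σ.symm (applySP d M σ x) = x := by
  funext j
  by_cases hj : 1 ≤ j ∧ j ≤ d
  · have hjd := isDir_natCast hj.1 hj.2
    have hfj := σ.maps _ hjd
    have hrange : 1 ≤ (σ.f j).natAbs ∧ (σ.f j).natAbs ≤ d :=
      ⟨Int.natAbs_pos.mpr hfj.1, hfj.2⟩
    rcases hfj.1.lt_or_gt with hneg | hpos
    · have hc : (((σ.f j).natAbs : ℕ) : ℤ) = -σ.f j := by omega
      simp only [applySP, SignedPerm.symm, if_pos hj, if_pos hrange, hc, σ.neg_inv,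
        σ.left_inv _ hjd, Int.natAbs_neg, Int.natAbs_natCast]
      split_ifs <;> omega
    · have hc : (((σ.f j).natAbs : ℕ) : ℤ) = σ.f j := by omega
      simp only [applySP, SignedPerm.symm, if_pos hj, if_pos hrange, hc, σ.left_inv _ hjd,
        Int.natAbs_natCast]
      split_ifs <;> omega
  · simp only [applySP, SignedPerm.symm, if_neg hj]

lemma applySP_injective (M : ℤ) : Function.Injective (applySP d M σ) :=
  Function.LeftInverse.injective (applySP_symm_applySP σ M)

lemma InCube.applySP_one {x : Pt} (hx : InCube d 1 x) : InCube d 1 (applySP d 1 σ x) := by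
  refine ⟨fun j hj1 hj2 => ?_, fun j hj => ?_⟩
  · have hi := σ.maps_inv _ (isDir_natCast hj1 hj2)
    have := hx.1 (σ.inv j).natAbs (Int.natAbs_pos.mpr hi.1) hi.2
    simp only [applySP, if_pos (And.intro hj1 hj2)]
    split_ifs <;> omega
  · simp only [applySP, if_neg (show ¬(1 ≤ j ∧ j ≤ d) by omega)]
    exact hx.2 j hj

lemma applySP_one_zero_apply {j : ℕ} (hj1 : 1 ≤ j) (hj2 : j ≤ d) :
    applySP d 1 σ ptZero j = flipped (σ.inv j) := by
  simp only [applySP, ptZero, flipped, if_pos (And.intro hj1 hj2)]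
  split_ifs <;> omega

end CubeSymmetry

def subcubePoint (v x : Pt) : Pt := fun j => 2 * v j + x j

def InSubcube (d : ℕ) (b w : Pt) : Prop :=
  (∀ j, 1 ≤ j → j ≤ d → w j = 2 * b j ∨ w j = 2 * b j + 1) ∧
    ∀ j, j = 0 ∨ d < j → w j = 2 * b j

lemma move_subcubePoint (v x : Pt) (g : ℤ) :
    move (subcubePoint v x) g = subcubePoint v (move x g) := by
  funext j
  simp only [move, subcubePoint]
  split_ifs <;> ring

lemma subcubePoint_injective (v : Pt) : Function.Injective (subcubePoint v) := fun x y h =>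
  funext fun j => by simpa [subcubePoint] using congrFun h j

lemma inSubcube_iff_exists {d : ℕ} {b w : Pt} :
    InSubcube d b w ↔ ∃ x, InCube d 1 x ∧ subcubePoint b x = w := by
  simp only [InSubcube, InCube, pow_one]
  constructor
  · rintro ⟨h1, h2⟩
    refine ⟨fun j => w j - 2 * b j, ⟨fun j hj1 hj2 => ?_, fun j hj => ?_⟩, ?_⟩
    · have := h1 j hj1 hj2
      dsimp only
      omega
    · have := h2 j hj
      dsimp only
      omega
    · funext j
      simp [subcubePoint]
  · rintro ⟨x, ⟨h1, h2⟩, rfl⟩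
    refine ⟨fun j hj1 hj2 => ?_, fun j hj => ?_⟩
    · have := h1 j hj1 hj2
      simp only [subcubePoint]
      omega
    · simp [subcubePoint, h2 j hj]

lemma InSubcube.unique {d : ℕ} {b b' w : Pt} (h : InSubcube d b w) (h' : InSubcube d b' w) :
    b = b' := by
  funext j
  by_cases hj : 1 ≤ j ∧ j ≤ d
  · have := h.1 j hj.1 hj.2
    have := h'.1 j hj.1 hj.2
    omega
  · have := h.2 j (by omega)
    have := h'.2 j (by omega)
    omega

lemma inCube_succ_iff {d k : ℕ} {w : Pt} :
    InCube d (k + 1) w ↔ ∃ b, InCube d k b ∧ InSubcube d b w := by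
  have hpow : (2 : ℤ) ^ (k + 1) = 2 * 2 ^ k := by ring
  constructor
  · rintro ⟨h1, h2⟩
    refine ⟨fun j => w j / 2, ⟨fun j hj1 hj2 => ?_, fun j hj => ?_⟩,
      fun j hj1 hj2 => ?_, fun j hj => ?_⟩
    · have := h1 j hj1 hj2
      dsimp only
      omega
    · simp [h2 j hj]
    · have := h1 j hj1 hj2
      dsimp only
      omega
    · simp [h2 j hj]
  · rintro ⟨b, ⟨h1, h2⟩, h3, h4⟩
    refine ⟨fun j hj1 hj2 => ?_, fun j hj => ?_⟩
    · have := h1 j hj1 hj2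
      have := h3 j hj1 hj2
      omega
    · rw [h4 j hj, h2 j hj, mul_zero]

section GrayPiece

variable {d : ℕ} (σ : SignedPerm d) (v : Pt)

lemma grayPiece_eq_map :
    grayPiece d σ v = (grayPath d).map (subcubePoint v ∘ applySP d 1 σ) := by
  have hstart : (fun j => 2 * v j + if 1 ≤ j ∧ j ≤ d then flipped (σ.inv j) else 0) =
      subcubePoint v (applySP d 1 σ ptZero) := by
    funext j
    simp only [subcubePoint, applySP, ptZero, flipped]
    split_ifs <;> omega
  rw [grayPiece, hstart, grayPath]
  refine pathVertices_map_of_comm (F := subcubePoint v ∘ applySP d 1 σ) (fun g hg x => ?_) ptZero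
  rw [Function.comp_apply, Function.comp_apply, applySP_move σ 1 (G_isDir d g hg),
    move_subcubePoint]

lemma mem_grayPiece_iff {w : Pt} : w ∈ grayPiece d σ v ↔ InSubcube d v w := by
  rw [grayPiece_eq_map, List.mem_map, inSubcube_iff_exists]
  constructor
  · rintro ⟨x, hx, rfl⟩
    exact ⟨_, ((mem_grayPath_iff d x).mp hx).applySP_one σ, rfl⟩
  · rintro ⟨y, hy, rfl⟩
    refine ⟨applySP d 1 σ.symm y, (mem_grayPath_iff d _).mpr (hy.applySP_one σ.symm), ?_⟩
    have := applySP_symm_applySP σ.symm 1 y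
    rw [SignedPerm.symm_symm] at this
    rw [Function.comp_apply, this]

lemma isUnitCurveAt_grayPiece : IsUnitCurveAt d v (grayPiece d σ v) := by
  refine ⟨⟨?_, isChain_pathVertices ?_ _⟩, fun w => mem_grayPiece_iff σ v⟩
  · rw [grayPiece_eq_map]
    exact (grayPath_nodup d).map ((subcubePoint_injective v).comp (applySP_injective σ 1))
  · simp only [List.mem_map]
    rintro _ ⟨g, hg, rfl⟩
    exact σ.maps g (G_isDir d g hg)

lemma grayPiece_headD :
    (grayPiece d σ v).headD ptZero = subcubePoint v (applySP d 1 σ ptZero) := by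
  rw [grayPiece_eq_map, List.headD_eq_head?, List.head?_map, grayPath, pathVertices,
    List.head?_scanl]
  rfl

lemma grayPiece_getLastD (hd : 1 ≤ d) :
    (grayPiece d σ v).getLastD ptZero =
      subcubePoint v (move (applySP d 1 σ ptZero) (σ.f d)) := by
  rw [grayPiece_eq_map, List.getLastD_eq_getLast?, List.getLast?_map, grayPath, pathVertices,
    List.getLast?_scanl, foldl_move_G hd]
  simp [applySP_move σ 1 (isDir_natCast hd le_rfl)]

end GrayPiece

lemma isEdge_subcubePoint_move_iff {d : ℕ} {u x y : Pt} {e : ℤ} (he : IsDir d e)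
    (hx : InCube d 1 x) (hy : InCube d 1 y) :
    IsEdge d (subcubePoint u x) (subcubePoint (move u e) y) ↔
      (∀ j, 1 ≤ j → j ≤ d → (y j = x j ↔ j ≠ e.natAbs)) ∧
        y e.natAbs = flipped e := by
  have hes := Int.sign_cases_of_ne_zero he.1
  have hen : 1 ≤ e.natAbs := Int.natAbs_pos.mpr he.1
  have hxe := hx.1 _ hen he.2
  have hye := hy.1 _ hen he.2
  simp only [pow_one] at hxe hye
  constructor
  · rintro ⟨e', he', hmove⟩
    have hes' := Int.sign_cases_of_ne_zero he'.1
    have hcoord : ∀ j, 2 * (if j = e.natAbs then u j + e.sign else u j) + y j =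
        if j = e'.natAbs then 2 * u j + x j + e'.sign else 2 * u j + x j :=
      fun j => congrFun hmove j
    have hcross := hcoord e.natAbs
    rw [if_pos rfl] at hcross
    have he'e : e'.natAbs = e.natAbs := by
      split_ifs at hcross <;> omega
    rw [if_pos he'e.symm] at hcross
    refine ⟨fun j hj1 hj2 => ?_, by simp only [flipped]; split_ifs <;> omega⟩
    rcases eq_or_ne j e.natAbs with rfl | hj
    · simp only [ne_eq, not_true_eq_false, iff_false]
      omega
    · have := hcoord j
      rw [if_neg hj, if_neg (he'e ▸ hj)] at this
      simp only [ne_eq, hj, not_false_eq_true, iff_true]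
      omega
  · rintro ⟨hbits, hye'⟩
    refine ⟨e, he, funext fun j => ?_⟩
    show 2 * (if j = e.natAbs then u j + e.sign else u j) + y j =
      if j = e.natAbs then 2 * u j + x j + e.sign else 2 * u j + x j
    rcases eq_or_ne j e.natAbs with rfl | hj
    · have := (hbits _ hen he.2).not.mpr (not_not.mpr rfl)
      simp only [↓reduceIte, flipped] at hye' ⊢
      split_ifs at hye' <;> omega
    · simp only [if_neg hj]
      by_cases hjd : 1 ≤ j ∧ j ≤ d
      · have := (hbits j hjd.1 hjd.2).mpr hj
        omega
      · have := hx.2 j (by omega)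
        have := hy.2 j (by omega)
        omega

lemma forall_int_Icc_iff_forall_nat {d : ℕ} {P : ℤ → Prop} :
    (∀ j : ℤ, 1 ≤ j → j ≤ d → P j) ↔ ∀ j : ℕ, 1 ≤ j → j ≤ d → P j := by
  refine ⟨fun h j hj1 hj2 => h j (by omega) (by omega), fun h j hj1 hj2 => ?_⟩
  lift j to ℕ using by omega
  exact h j (by omega) (by omega)

section Junction

variable {d : ℕ} (σ σ' : SignedPerm d)

lemma inCube_one_zero : InCube d 1 ptZero :=
  ⟨fun _ _ _ => by simp [ptZero], fun _ _ => rfl⟩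

lemma inCube_one_move_zero (hd : 1 ≤ d) : InCube d 1 (move ptZero d) := by
  have hsg : (d : ℤ).sign = 1 := Int.sign_eq_one_of_pos (by omega)
  refine ⟨fun j _ _ => ?_, fun j hj => ?_⟩ <;>
    simp only [move, ptZero, Int.natAbs_natCast, hsg] <;> split_ifs <;> omega

lemma applySP_one_zero_eq_move_iff (hd : 1 ≤ d) {j : ℕ} (hj1 : 1 ≤ j) (hj2 : j ≤ d)
    (e : ℤ) :
    (applySP d 1 σ' ptZero j = move (applySP d 1 σ ptZero) (σ.f d) j ↔ j ≠ e.natAbs) ↔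
      (Int.sign (σ'.inv j) = Int.sign (σ.inv j) ↔
        ((j : ℤ).natAbs = (σ.f d).natAbs ↔ (j : ℤ).natAbs = e.natAbs)) := by
  have hjd := isDir_natCast hj1 hj2
  have hdd := isDir_natCast hd le_rfl
  rw [sign_eq_sign_iff_flipped_eq (σ'.maps_inv _ hjd).1 (σ.maps_inv _ hjd).1,
    applySP_one_zero_apply σ' hj1 hj2, Int.natAbs_natCast]
  simp only [move]
  rw [applySP_one_zero_apply σ hj1 hj2]
  have hpos : σ.inv j = d ↔ σ.f d = j := σ.inv_eq_iff hdd hjd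
  have hneg : σ.inv j = -d ↔ σ.f d = -j := by
    rw [σ.inv_eq_iff hdd.neg hjd, σ.neg, neg_eq_iff_eq_neg]
  have := Int.sign_cases_of_ne_zero (σ.maps _ hdd).1
  simp only [flipped]
  split_ifs <;> omega

lemma applySP_one_zero_natAbs_eq_flipped_iff {e : ℤ} (he : IsDir d e) :
    applySP d 1 σ' ptZero e.natAbs = flipped e ↔ Int.sign (σ'.inv e) = 1 := by
  rw [applySP_one_zero_apply σ' (Int.natAbs_pos.mpr he.1) he.2, Int.sign_eq_one_iff_pos]
  have := (σ'.maps_inv e he).1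
  rcases he.1.lt_or_gt with hneg | hpos
  · rw [show ((e.natAbs : ℕ) : ℤ) = -e by omega, σ'.neg_inv]
    simp only [flipped]
    split_ifs <;> omega
  · rw [show ((e.natAbs : ℕ) : ℤ) = e by omega]
    simp only [flipped]
    split_ifs <;> omega

lemma isEdge_grayPiece_getLastD_headD_iff (hd : 1 ≤ d) (u : Pt) {e : ℤ} (he : IsDir d e) :
    IsEdge d ((grayPiece d σ u).getLastD ptZero) ((grayPiece d σ' (move u e)).headD ptZero) ↔
      (∀ j : ℤ, 1 ≤ j → j ≤ (d : ℤ) →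
        (Int.sign (σ'.inv j) = Int.sign (σ.inv j) ↔
          (j.natAbs = (σ.f (d : ℤ)).natAbs ↔ j.natAbs = e.natAbs))) ∧
      Int.sign (σ'.inv e) = 1 := by
  have hexit : InCube d 1 (move (applySP d 1 σ ptZero) (σ.f d)) := by
    rw [← applySP_move σ 1 (isDir_natCast hd le_rfl)]
    exact (inCube_one_move_zero hd).applySP_one σ
  rw [grayPiece_getLastD σ u hd, grayPiece_headD,
    isEdge_subcubePoint_move_iff he hexit (inCube_one_zero.applySP_one σ'),
    forall_int_Icc_iff_forall_nat]
  exact and_congr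
    (forall₃_congr fun j hj1 hj2 => applySP_one_zero_eq_move_iff σ σ' hd hj1 hj2 e)
    (applySP_one_zero_natAbs_eq_flipped_iff σ' he)

end Junction

lemma List.isChain_flatten_map_range_iff {α : Type*} {R : α → α → Prop} {C : ℕ → List α}
    {K : ℕ} (a : α) (hC : ∀ i < K, C i ≠ [] ∧ (C i).IsChain R) :
    ((List.range K).map C).flatten.IsChain R ↔
      ∀ i, i + 1 < K → R ((C i).getLastD a) ((C (i + 1)).headD a) := by
  have hne : [] ∉ (List.range K).map C := by
    simp only [List.mem_map, List.mem_range, not_exists, not_and]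
    exact fun i hi h => (hC i hi).1 h
  have hlast : ∀ i < K, (C i).getLast? = some ((C i).getLastD a) := fun i hi => by
    rw [List.getLastD_eq_getLast?, List.getLast?_eq_some_getLast (hC i hi).1]
    rfl
  have hhead : ∀ i < K, (C i).head? = some ((C i).headD a) := fun i hi => by
    rw [List.headD_eq_head?, List.head?_eq_some_head (hC i hi).1]
    rfl
  simp only [List.isChain_flatten hne, List.mem_map, List.mem_range, forall_exists_index, and_imp,
    forall_apply_eq_imp_iff₂, List.isChain_map, List.isChain_range]
  rw [and_iff_right fun i hi => (hC i hi).2]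
  refine ⟨fun h i hi => ?_, fun h i hi => ?_⟩
  · exact h i (by omega) _ (hlast i (by omega)) _ (hhead (i + 1) hi)
  · rw [hlast i (by omega), hhead (i + 1) (by omega)]
    intro x hx y hy
    rw [Option.mem_some_iff] at hx hy
    subst hx hy
    exact h i (by omega)

section Inflation

variable {d k K : ℕ} {v : ℕ → Pt} {C : ℕ → List Pt}

lemma IsUnitCurveAt.mem_iff {b : Pt} {c : List Pt} (h : IsUnitCurveAt d b c) (w : Pt) :
    w ∈ c ↔ InSubcube d b w :=
  h.2 w

lemma IsUnitCurveAt.ne_nil {b : Pt} {c : List Pt} (h : IsUnitCurveAt d b c) : c ≠ [] :=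
  List.ne_nil_of_mem <|
    (h.mem_iff (fun j => 2 * b j)).mpr ⟨fun _ _ _ => Or.inl rfl, fun _ _ => rfl⟩

lemma nodup_flatten_of_isUnitCurveAt (hv : ((List.range K).map v).Nodup)
    (hC : ∀ i < K, IsUnitCurveAt d (v i) (C i)) : ((List.range K).map C).flatten.Nodup := by
  rw [List.nodup_flatten, List.pairwise_map]
  refine ⟨?_, List.nodup_range.pairwise_of_forall_ne fun i hi j hj hij w hwi hwj => hij ?_⟩
  · simp only [List.mem_map, List.mem_range]
    rintro _ ⟨i, hi, rfl⟩
    exact (hC i hi).1.1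
  · refine List.inj_on_of_nodup_map hv hi hj ?_
    rw [List.mem_range] at hi hj
    exact (((hC i hi).mem_iff w).mp hwi).unique (((hC j hj).mem_iff w).mp hwj)

lemma mem_flatten_iff_inCube_succ (hA : ∀ w, w ∈ (List.range K).map v ↔ InCube d k w)
    (hC : ∀ i < K, IsUnitCurveAt d (v i) (C i)) (w : Pt) :
    w ∈ ((List.range K).map C).flatten ↔ InCube d (k + 1) w := by
  simp only [inCube_succ_iff, ← hA, List.mem_flatten, List.mem_map, List.mem_range]
  constructor
  · rintro ⟨_, ⟨i, hi, rfl⟩, hw⟩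
    exact ⟨v i, ⟨i, hi, rfl⟩, ((hC i hi).mem_iff w).mp hw⟩
  · rintro ⟨_, ⟨i, hi, rfl⟩, hw⟩
    exact ⟨C i, ⟨i, hi, rfl⟩, ((hC i hi).mem_iff w).mpr hw⟩

lemma isKCurve_flatten_iff (hA : IsKCurve d k ((List.range K).map v))
    (hC : ∀ i < K, IsUnitCurveAt d (v i) (C i)) :
    IsKCurve d (k + 1) ((List.range K).map C).flatten ↔
      ∀ i, i + 1 < K → IsEdge d ((C i).getLastD ptZero) ((C (i + 1)).headD ptZero) := by
  have hchain := List.isChain_flatten_map_range_iff (R := IsEdge d) ptZero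
    fun i hi => ⟨(hC i hi).ne_nil, (hC i hi).1.2⟩
  exact ⟨fun h => hchain.mp h.1.2, fun h => ⟨⟨nodup_flatten_of_isUnitCurveAt hA.1.1 hC,
    hchain.mpr h⟩, mem_flatten_iff_inCube_succ hA.2 hC⟩⟩

lemma isInflationWF_grayPieces (σ : ℕ → SignedPerm d)
    (h : IsGridCurve d ((List.range K).map fun i => grayPiece d (σ i) (v i)).flatten) :
    IsInflationWF d ((List.range K).map v)
      ((List.range K).map fun i => grayPiece d (σ i) (v i)).flatten := by
  refine ⟨σ, ?_, h⟩
  rw [List.length_map, List.length_range]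
  refine congrArg _ (List.map_congr_left fun i hi => ?_)
  rw [List.getD_eq_getElem?_getD, List.getElem?_map, List.getElem?_range (List.mem_range.mp hi)]
  rfl

end Inflation

theorem wellfolded_inflation_conditions_general (d k K : ℕ) (hd : 1 ≤ d)
    (v : ℕ → Pt) (A : List Pt) (hA : A = (List.range K).map v)
    (hwf : WellFolded d A) (hkc : IsKCurve d k A)
    (σ : ℕ → SignedPerm d) (e : ℕ → ℤ)
    (he : ∀ i, i + 1 < K → HasDir d (v i) (v (i + 1)) (e i))
    (B : List Pt)
    (hB : B = ((List.range K).map (fun i => grayPiece d (σ i) (v i))).flatten) :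
    (IsKCurve d (k + 1) B ∧ WellFolded d B) ↔
      (∀ i, i + 1 < K →
        (∀ j : ℤ, 1 ≤ j → j ≤ (d : ℤ) →
          ((Int.sign ((σ (i + 1)).inv j) = Int.sign ((σ i).inv j)) ↔
            ((j.natAbs = ((σ i).f (d : ℤ)).natAbs) ↔ (j.natAbs = (e i).natAbs))) ∧
          (¬ ((j.natAbs = ((σ i).f (d : ℤ)).natAbs) ↔ (j.natAbs = (e i).natAbs)) →
            Int.sign ((σ (i + 1)).inv j) = - Int.sign ((σ i).inv j))) ∧
        Int.sign ((σ (i + 1)).inv (e i)) = 1) := by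
  subst hA hB
  rw [and_iff_left_of_imp fun hB => hwf.inflate (isInflationWF_grayPieces σ hB.1),
    isKCurve_flatten_iff hkc fun i _ => isUnitCurveAt_grayPiece (σ i) (v i)]
  refine forall₂_congr fun i hi => ?_
  rw [(he i hi).2, isEdge_grayPiece_getLastD_headD_iff (σ i) (σ (i + 1)) hd (v i) (he i hi).1]
  refine and_congr_left' (forall₃_congr fun j hj1 hj2 => iff_self_and.mpr fun hsign hne => ?_)
  have hjd : IsDir d j := ⟨by omega, by omega⟩
  exact Int.sign_eq_neg_sign_of_sign_ne ((σ (i + 1)).maps_inv j hjd).1 ((σ i).maps_inv j hjd).1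
    (mt hsign.mp hne)

/-- continuity conditions for inflation of well-folded curves.
`A` is a well-folded `k`-curve with vertices `v 0, …, v (K−1)` and edge
directions `e 0, …, e (K−2)`; `B` is formed by replacing each vertex `v i` by the
1-curve `σ i (G(d))` in the cube `2·(v i) + {0,1}^d` and each edge by an edge of
the same direction.  Then `B` is a valid well-folded `(k+1)`-curve if and only if
for each `i` with `i+1 < K`: (i) for every `j ∈ {1,…,d}`,
`sgn(σ_{i+1}⁻¹(j)) = sgn(σ_i⁻¹(j))` iff `j` equals neither or both of `|σ_i(d)|`
and `|e_i|`, and otherwise `sgn(σ_{i+1}⁻¹(j)) = −sgn(σ_i⁻¹(j))`; and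
(ii) `sgn(σ_{i+1}⁻¹(e_i)) = 1`. -/
theorem wellfolded_inflation_conditions (d k K : ℕ) (hd : 1 ≤ d)
    (hK : K = 2 ^ (d * k))
    (v : ℕ → Pt) (A : List Pt) (hA : A = (List.range K).map v)
    (hwf : WellFolded d A) (hkc : IsKCurve d k A)
    (σ : ℕ → SignedPerm d) (e : ℕ → ℤ)
    (he : ∀ i, i + 1 < K → HasDir d (v i) (v (i + 1)) (e i))
    (B : List Pt)
    (hB : B = ((List.range K).map (fun i => grayPiece d (σ i) (v i))).flatten) :
    (IsKCurve d (k + 1) B ∧ WellFolded d B) ↔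
      (∀ i, i + 1 < K →
        (∀ j : ℤ, 1 ≤ j → j ≤ (d : ℤ) →
          ((Int.sign ((σ (i + 1)).inv j) = Int.sign ((σ i).inv j)) ↔
            ((j.natAbs = ((σ i).f (d : ℤ)).natAbs) ↔ (j.natAbs = (e i).natAbs))) ∧
          (¬ ((j.natAbs = ((σ i).f (d : ℤ)).natAbs) ↔ (j.natAbs = (e i).natAbs)) →
            Int.sign ((σ (i + 1)).inv j) = - Int.sign ((σ i).inv j))) ∧
        Int.sign ((σ (i + 1)).inv (e i)) = 1) :=
  wellfolded_inflation_conditions_general d k K hd v A hA hwf hkc σ e he B hB
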